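/- A pair of consecutive data points that contains no center and is not split by any Voronoi boundary ends up entirely in one cluster: if x_{2i-1}, x_{2i} both lie strictly on the same side of all midpoints between consecutive centers, then they are assigned to the same center; if additionally some other point is assigned to that same center, the resulting cluster strictly contains the pair. -/

import Mathlib

open scoped Classical

/-- Nearest-center assignment in ℝ (ties broken toward the smaller center). -/
noncomputable def nearest (C : Finset ℝ) (p : ℝ) : ℝ :=
  ((C.filter (fun c => ∀ c' ∈ C, |p - c| ≤ |p - c'|)).min).untopD 0

/-!
Since `(p - c)² - (p - c')² = 2 (c' - c) (p - (c + c') / 2)`, the comparison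
`|p - c| ≤ |p - c'|` only depends on which side of the midpoint `(c + c') / 2` the point `p`
lies. Two points strictly on the same side of every midpoint therefore see the same set of
closest centers, so they get the same nearest center.
-/

def SameVoronoiSide (C : Finset ℝ) (p q : ℝ) : Prop :=
  ∀ c ∈ C, ∀ c' ∈ C, c < c' →
    ((p < (c + c') / 2 ∧ q < (c + c') / 2) ∨ ((c + c') / 2 < p ∧ (c + c') / 2 < q))

lemma abs_sub_le_abs_sub_iff_mul_nonpos (p c c' : ℝ) :
    |p - c| ≤ |p - c'| ↔ (c' - c) * (p - (c + c') / 2) ≤ 0 := by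
  have hdiff : (p - c) ^ 2 - (p - c') ^ 2 = 2 * ((c' - c) * (p - (c + c') / 2)) := by ring
  rw [← sq_le_sq, ← sub_nonpos, hdiff]
  constructor <;> intro <;> linarith

lemma mul_nonpos_iff_of_mul_pos {t u v : ℝ} (huv : 0 < u * v) : t * u ≤ 0 ↔ t * v ≤ 0 := by
  constructor <;> intro h <;> nlinarith [sq_nonneg u, sq_nonneg v]

lemma midpoint_sub_mul_pos_of_sameVoronoiSide {C : Finset ℝ} {p q : ℝ}
    (h : SameVoronoiSide C p q) {c c' : ℝ} (hc : c ∈ C) (hc' : c' ∈ C) (hne : c ≠ c') :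
    0 < (p - (c + c') / 2) * (q - (c + c') / 2) := by
  rcases hne.lt_or_gt with hlt | hlt
  · rcases h c hc c' hc' hlt with ⟨hp, hq⟩ | ⟨hp, hq⟩
    · exact mul_pos_of_neg_of_neg (by linarith) (by linarith)
    · exact mul_pos (by linarith) (by linarith)
  · rw [add_comm c c']
    rcases h c' hc' c hc hlt with ⟨hp, hq⟩ | ⟨hp, hq⟩
    · exact mul_pos_of_neg_of_neg (by linarith) (by linarith)
    · exact mul_pos (by linarith) (by linarith)

lemma abs_sub_le_abs_sub_iff_of_sameVoronoiSide {C : Finset ℝ} {p q : ℝ}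
    (h : SameVoronoiSide C p q) {c c' : ℝ} (hc : c ∈ C) (hc' : c' ∈ C) :
    |p - c| ≤ |p - c'| ↔ |q - c| ≤ |q - c'| := by
  rcases eq_or_ne c c' with rfl | hne
  · simp
  rw [abs_sub_le_abs_sub_iff_mul_nonpos, abs_sub_le_abs_sub_iff_mul_nonpos]
  exact mul_nonpos_iff_of_mul_pos (midpoint_sub_mul_pos_of_sameVoronoiSide h hc hc' hne)

lemma nearest_eq_of_sameVoronoiSide {C : Finset ℝ} {p q : ℝ} (h : SameVoronoiSide C p q) :
    nearest C p = nearest C q := by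
  unfold nearest
  congr 2
  refine Finset.filter_congr fun c hc => forall₂_congr fun c' hc' => ?_
  exact abs_sub_le_abs_sub_iff_of_sameVoronoiSide h hc hc'

lemma Finset.pair_ssubset_of_mem {α : Type*} [DecidableEq α] {s : Finset α} {a b p : α}
    (ha : a ∈ s) (hb : b ∈ s) (hp : p ∈ s) (hpa : p ≠ a) (hpb : p ≠ b) :
    {a, b} ⊂ s := by
  rw [Finset.ssubset_iff_of_subset (Finset.insert_subset ha (Finset.singleton_subset_iff.2 hb))]
  exact ⟨p, hp, by simp [hpa, hpb]⟩

/-- a pair of consecutive data points lying strictly on the same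
side of every midpoint between two centers is assigned to a single center; if
some further data point is assigned to that same center, the resulting
cluster strictly contains the pair (so the partition is not the target
pairing). -/
theorem stmt_12 (k : ℕ) (x : Fin (2 * k) → ℝ)
    (C : Finset ℝ) (i : Fin k)
    (a b : ℝ)
    (ha : a = x ⟨2 * i.val, by have := i.isLt; omega⟩)
    (hb : b = x ⟨2 * i.val + 1, by have := i.isLt; omega⟩)
    (hside : ∀ c ∈ C, ∀ c' ∈ C, c < c' →
      ((a < (c + c') / 2 ∧ b < (c + c') / 2) ∨
       ((c + c') / 2 < a ∧ (c + c') / 2 < b))) :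
    nearest C a = nearest C b ∧
    ∀ p ∈ Finset.image x Finset.univ, p ≠ a → p ≠ b →
      nearest C p = nearest C a →
      ({a, b} : Finset ℝ) ⊂
        (Finset.image x Finset.univ).filter
          (fun q => nearest C q = nearest C a) := by
  have hab : nearest C a = nearest C b := nearest_eq_of_sameVoronoiSide hside
  refine ⟨hab, fun p hp hpa hpb hpC => ?_⟩
  have ha_mem : a ∈ Finset.image x Finset.univ :=
    ha ▸ Finset.mem_image_of_mem x (Finset.mem_univ _)
  have hb_mem : b ∈ Finset.image x Finset.univ :=
    hb ▸ Finset.mem_image_of_mem x (Finset.mem_univ _)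
  exact Finset.pair_ssubset_of_mem (Finset.mem_filter.2 ⟨ha_mem, rfl⟩)
    (Finset.mem_filter.2 ⟨hb_mem, hab.symm⟩) (Finset.mem_filter.2 ⟨hp, hpC⟩) hpa hpb
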